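/- arXiv:1412.7289 — 9 statements merged into one kernel-verified Lean document; each statement's English description precedes it below -/
import Mathlib

section
/- Let C be a triangulated category and let T be a full subcategory of C. Let W be the class of morphisms f : X → Y such that in some (equivalently any) triangle Z → X → Y → ΣZ both connecting morphisms factor through objects of T^⊥. If f is a retract of a morphism w in W (in the arrow category), then f belongs to W. -/
open CategoryTheory CategoryTheory.Limits CategoryTheory.Pretriangulated

variable {C : Type*} [Category C] [Preadditive C] [HasZeroObject C]
  [HasShift C ℤ] [∀ n : ℤ, Functor.Additive (CategoryTheory.shiftFunctor C n)]
  [Pretriangulated C]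

/-- `f` factors through an object of the set `S`. -/
def FactorsThruSet (S : Set C) {X Y : C} (f : X ⟶ Y) : Prop :=
  ∃ U ∈ S, ∃ (a : X ⟶ U) (b : U ⟶ Y), f = a ≫ b

/-- The right perpendicular subcategory `T^⊥` of a full subcategory `T`. -/
def rperp (T : Set C) : Set C := {Z | ∀ T' ∈ T, ∀ (f : T' ⟶ Z), f = 0}

/-- The class `W` of morphisms whose connecting morphisms in any triangle factor
through `T^⊥`. -/
def Wclass (T : Set C) {X Y : C} (f : X ⟶ Y) : Prop :=
  ∀ (Z : C) (r : Z ⟶ X) (s : Y ⟶ Z⟦(1:ℤ)⟧),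
    (Triangle.mk r f s ∈ distTriang C) →
      FactorsThruSet (rperp T) r ∧ FactorsThruSet (rperp T) s

/-- `f` is a retract of `g` in the arrow category of `C`. -/
def IsArrowRetract {X Y Z W : C} (f : X ⟶ Y) (g : Z ⟶ W) : Prop :=
  ∃ (i : X ⟶ Z) (r : Z ⟶ X) (j : Y ⟶ W) (s : W ⟶ Y),
    i ≫ r = 𝟙 X ∧ j ≫ s = 𝟙 Y ∧ i ≫ g = f ≫ j ∧ g ≫ s = r ≫ f

/-! The retraction of `w` onto `f` extends (TR3) to morphisms of distinguished triangles in both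
directions. Through the section, the first connecting morphism of `f` becomes a composite through
that of `w`; through the retraction, so does the third. Morphisms factoring through `T^⊥` form an
ideal. -/

namespace FactorsThruSet

variable {D : Type*} [Category D] {S : Set D} {X Y : D} {f : X ⟶ Y}

lemma precomp (hf : FactorsThruSet S f) {W : D} (a : W ⟶ X) : FactorsThruSet S (a ≫ f) := by
  obtain ⟨U, hU, p, q, rfl⟩ := hf
  exact ⟨U, hU, a ≫ p, q, (Category.assoc _ _ _).symm⟩

lemma postcomp (hf : FactorsThruSet S f) {W : D} (b : Y ⟶ W) : FactorsThruSet S (f ≫ b) := by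
  obtain ⟨U, hU, p, q, rfl⟩ := hf
  exact ⟨U, hU, p, q ≫ b, Category.assoc _ _ _⟩

end FactorsThruSet

section Triangles

variable {S : Set C} {T₁ T₂ : Triangle C}

lemma factorsThruSet_mor₁_of_section (hT₁ : T₁ ∈ distTriang C) (hT₂ : T₂ ∈ distTriang C)
    {i : T₁.obj₂ ⟶ T₂.obj₂} {ρ : T₂.obj₂ ⟶ T₁.obj₂} {j : T₁.obj₃ ⟶ T₂.obj₃}
    (hiρ : i ≫ ρ = 𝟙 _) (comm : T₁.mor₂ ≫ j = i ≫ T₂.mor₂)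
    (h : FactorsThruSet S T₂.mor₁) : FactorsThruSet S T₁.mor₁ := by
  obtain ⟨a, ha, -⟩ := complete_distinguished_triangle_morphism₁ T₁ T₂ hT₁ hT₂ i j comm
  have : T₁.mor₁ = a ≫ T₂.mor₁ ≫ ρ := by
    rw [← Category.assoc, ← ha, Category.assoc, hiρ, Category.comp_id]
  exact this ▸ (h.postcomp ρ).precomp a

lemma factorsThruSet_mor₃_of_retraction (hT₁ : T₁ ∈ distTriang C) (hT₂ : T₂ ∈ distTriang C)
    {ρ : T₂.obj₂ ⟶ T₁.obj₂} {j : T₁.obj₃ ⟶ T₂.obj₃}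
    {σ : T₂.obj₃ ⟶ T₁.obj₃} (hjσ : j ≫ σ = 𝟙 _) (comm : T₂.mor₂ ≫ σ = ρ ≫ T₁.mor₂)
    (h : FactorsThruSet S T₂.mor₃) : FactorsThruSet S T₁.mor₃ := by
  obtain ⟨b, -, hb⟩ := complete_distinguished_triangle_morphism₁ T₂ T₁ hT₂ hT₁ ρ σ comm
  have : T₁.mor₃ = j ≫ T₂.mor₃ ≫ b⟦(1 : ℤ)⟧' := by
    rw [hb, ← Category.assoc, hjσ, Category.id_comp]
  exact this ▸ (h.postcomp _).precomp j

end Triangles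

/-- The class `W` is stable under retracts in the arrow category. -/
theorem Wclass_stableUnderRetracts (T : Set C) {X Y X' Y' : C}
    (f : X ⟶ Y) (w : X' ⟶ Y') (hretract : IsArrowRetract f w) (hw : Wclass T w) :
    Wclass T f := by
  obtain ⟨i, ρ, j, σ, hiρ, hjσ, hiw, hwσ⟩ := hretract
  intro Z r s hf
  obtain ⟨Z', r', s', hw'⟩ := distinguished_cocone_triangle₁ w
  obtain ⟨hr', hs'⟩ := hw Z' r' s' hw'
  exact ⟨factorsThruSet_mor₁_of_section hf hw' hiρ hiw.symm hr',
    factorsThruSet_mor₃_of_retraction hf hw' hjσ hwσ hs'⟩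
end

section
/- Let C be a triangulated category, let R and S be full subcategories of C, and let W' be the class of morphisms w such that in any triangle Z --r--> X --w--> Y --s--> ΣZ, the morphism r factors through R^⊥ and s factors through S^⊥. If f : X → Y and g : Y → Z both belong to W', then the composite g ∘ f belongs to W'. (One may assume R and S are contravariantly finite and extension-closed.) -/
open CategoryTheory CategoryTheory.Limits CategoryTheory.Pretriangulated

variable {C : Type*} [Category C] [Preadditive C] [HasZeroObject C]
  [HasShift C ℤ] [∀ n : ℤ, Functor.Additive (CategoryTheory.shiftFunctor C n)]
  [Pretriangulated C]

/-- The class `W'` determined by a pair of subcategories `R`, `S`. -/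
def W'class (R S : Set C) {X Y : C} (w : X ⟶ Y) : Prop :=
  ∀ (Z : C) (r : Z ⟶ X) (s : Y ⟶ Z⟦(1:ℤ)⟧),
    (Triangle.mk r w s ∈ distTriang C) →
      FactorsThruSet (rperp R) r ∧ FactorsThruSet (rperp S) s

/-- A subcategory is contravariantly finite if every object admits a right approximation. -/
def ContravariantlyFinite (T : Set C) : Prop :=
  ∀ X : C, ∃ T₀ ∈ T, ∃ (p : T₀ ⟶ X), ∀ T' ∈ T, ∀ (u : T' ⟶ X), ∃ v : T' ⟶ T₀, v ≫ p = u

/-- A subcategory is extension-closed if it is stable under extensions in triangles. -/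
def ExtensionClosed (T : Set C) : Prop :=
  ∀ (X Y Z : C) (a : X ⟶ Y) (b : Y ⟶ Z) (c : Z ⟶ X⟦(1:ℤ)⟧),
    (Triangle.mk a b c ∈ distTriang C) → X ∈ T → Z ∈ T → Y ∈ T

/-! Put triangles `Z₁ → X → Y` on `f` and `Z₂ → Y → Z` on `g`, and let `Z₀ →r X → Z →s ΣZ₀`
be a triangle on `f ≫ g`. Since `r ≫ f ≫ g = 0`, `r ≫ f` factors through `Z₂ → Y`, hence
through some `U₂ ∈ R^⊥`, while `Z₁ → X` factors through some `U₁ ∈ R^⊥`. From a cone of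
`Z₀ → U₂` one builds an extension `U₁ → E → U₂ → ΣU₁` through which `r` factors, and `R^⊥` is
closed under extensions. The argument for `s` is dual. -/

namespace CategoryTheory.Pretriangulated.Triangle

lemma yoneda_exact₁ (T : Triangle C) (hT : T ∈ distTriang C) {X : C} (f : T.obj₁ ⟶ X)
    (hf : T.mor₃ ≫ f⟦(1 : ℤ)⟧' = 0) : ∃ g : T.obj₂ ⟶ X, f = T.mor₁ ≫ g := by
  obtain ⟨g, hg, -⟩ := complete_distinguished_triangle_morphism₂ T _ hT
    (contractible_distinguished X) f 0 (hf.trans zero_comp.symm)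
  exact ⟨g, (Category.comp_id f).symm.trans hg.symm⟩

end CategoryTheory.Pretriangulated.Triangle

namespace FactorsThruSet

variable {D : Type*} [Category D] {S : Set D} {X Y Z : D}

lemma comp_left {g : Y ⟶ Z} (h : FactorsThruSet S g) (f : X ⟶ Y) :
    FactorsThruSet S (f ≫ g) := by
  obtain ⟨U, hU, a, b, rfl⟩ := h
  exact ⟨U, hU, f ≫ a, b, (Category.assoc _ _ _).symm⟩

lemma comp_right {f : X ⟶ Y} (h : FactorsThruSet S f) (g : Y ⟶ Z) :
    FactorsThruSet S (f ≫ g) := by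
  obtain ⟨U, hU, a, b, rfl⟩ := h
  exact ⟨U, hU, a, b ≫ g, Category.assoc _ _ _⟩

end FactorsThruSet

lemma rperp_extensionClosed (T : Set C) : ExtensionClosed (rperp T) := by
  intro A E B a b c hE hA hB T' hT' φ
  obtain ⟨φ', rfl⟩ : ∃ φ' : T' ⟶ A, φ = φ' ≫ a :=
    Triangle.coyoneda_exact₂ _ hE φ (hB T' hT' (φ ≫ b))
  rw [hA T' hT' φ', zero_comp]

variable {T : Set C}

lemma factorsThruSet_of_comp_of_mor₁ (hT : ExtensionClosed T) {Z₁ X Y Z₀ : C}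
    {r₁ : Z₁ ⟶ X} {f : X ⟶ Y} {s₁ : Y ⟶ Z₁⟦(1 : ℤ)⟧}
    (hF : Triangle.mk r₁ f s₁ ∈ distTriang C) (h₁ : FactorsThruSet T r₁) (r : Z₀ ⟶ X)
    (h : FactorsThruSet T (r ≫ f)) : FactorsThruSet T r := by
  obtain ⟨U₁, hU₁, a₁, b₁, rfl⟩ := h₁
  obtain ⟨U₂, hU₂, q, b₂, hq⟩ := h
  obtain ⟨P, π, τ, hP⟩ := distinguished_cocone_triangle₁ q
  have hπq : π ≫ q = 0 := comp_distTriang_mor_zero₁₂ _ hP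
  have hτπ : τ ≫ π⟦(1 : ℤ)⟧' = 0 := comp_distTriang_mor_zero₃₁ _ hP
  have hπrf : (π ≫ r) ≫ f = 0 := by rw [Category.assoc, hq, reassoc_of% hπq, zero_comp]
  obtain ⟨c, hc⟩ : ∃ c : P ⟶ Z₁, π ≫ r = c ≫ a₁ ≫ b₁ :=
    Triangle.coyoneda_exact₂ _ hF (π ≫ r) hπrf
  obtain ⟨E, ι, σ, hE⟩ := distinguished_cocone_triangle₂ (τ ≫ (c ≫ a₁)⟦(1 : ℤ)⟧')
  obtain ⟨ε, hπε, hεσ⟩ : ∃ ε : Z₀ ⟶ E, π ≫ ε = (c ≫ a₁) ≫ ι ∧ q ≫ 𝟙 U₂ = ε ≫ σ :=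
    complete_distinguished_triangle_morphism₂ _ _ hP hE (c ≫ a₁) (𝟙 U₂)
      (Category.id_comp _).symm
  have hobs : (τ ≫ (c ≫ a₁)⟦(1 : ℤ)⟧') ≫ b₁⟦(1 : ℤ)⟧' = 0 := by
    rw [Category.assoc, ← Functor.map_comp, Category.assoc, ← hc, Functor.map_comp,
      reassoc_of% hτπ, zero_comp]
  obtain ⟨β, hβ⟩ : ∃ β : E ⟶ X, b₁ = ι ≫ β := Triangle.yoneda_exact₁ _ hE b₁ hobs
  have hπ : π ≫ (r - ε ≫ β) = 0 := by
    rw [Preadditive.comp_sub, hc, reassoc_of% hπε, hβ, sub_self]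
  obtain ⟨d, hd⟩ : ∃ d : U₂ ⟶ X, r - ε ≫ β = q ≫ d := Triangle.yoneda_exact₂ _ hP _ hπ
  refine ⟨E, hT _ _ _ _ _ _ hE hU₁ hU₂, ε, β + σ ≫ d, ?_⟩
  rw [Category.comp_id] at hεσ
  rw [Preadditive.comp_add, ← reassoc_of% hεσ, ← hd, add_sub_cancel]

lemma factorsThruSet_of_comp_of_mor₃ (hT : ExtensionClosed T) {Z₂ Y Z W : C}
    {r₂ : Z₂ ⟶ Y} {g : Y ⟶ Z} {s₂ : Z ⟶ Z₂⟦(1 : ℤ)⟧}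
    (hG : Triangle.mk r₂ g s₂ ∈ distTriang C) (h₂ : FactorsThruSet T s₂) (s : Z ⟶ W)
    (h : FactorsThruSet T (g ≫ s)) : FactorsThruSet T s := by
  obtain ⟨V₂, hV₂, a₂, b₂, rfl⟩ := h₂
  obtain ⟨V₁, hV₁, p, k, hp⟩ := h
  obtain ⟨Q, π, τ, hQ⟩ := distinguished_cocone_triangle k
  have hkπ : k ≫ π = 0 := comp_distTriang_mor_zero₁₂ _ hQ
  have hπτ : π ≫ τ = 0 := comp_distTriang_mor_zero₂₃ _ hQ
  have hgsπ : g ≫ s ≫ π = 0 := by rw [reassoc_of% hp, hkπ, comp_zero]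
  obtain ⟨e, he⟩ : ∃ e : Z₂⟦(1 : ℤ)⟧ ⟶ Q, s ≫ π = (a₂ ≫ b₂) ≫ e :=
    Triangle.yoneda_exact₃ _ hG (s ≫ π) hgsπ
  obtain ⟨E, ι, σ, hE⟩ := distinguished_cocone_triangle₂ ((b₂ ≫ e) ≫ τ)
  obtain ⟨ε, hιε, hεπ⟩ : ∃ ε : E ⟶ W, ι ≫ ε = 𝟙 V₁ ≫ k ∧ σ ≫ b₂ ≫ e = ε ≫ π :=
    complete_distinguished_triangle_morphism₂ _ _ hE hQ (𝟙 V₁) (b₂ ≫ e)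
      ((congrArg _ (CategoryTheory.Functor.map_id _ _)).trans (Category.comp_id _))
  have hobs : a₂ ≫ (b₂ ≫ e) ≫ τ = 0 := by
    rw [← Category.assoc, ← Category.assoc, ← he, Category.assoc, hπτ, comp_zero]
  obtain ⟨l, hl⟩ : ∃ l : Z ⟶ E, a₂ = l ≫ σ := Triangle.coyoneda_exact₃ _ hE a₂ hobs
  have hπ : (s - l ≫ ε) ≫ π = 0 := by
    rw [Preadditive.sub_comp, Category.assoc, ← hεπ, he, hl, Category.assoc,
      Category.assoc, sub_self]
  obtain ⟨d, hd⟩ : ∃ d : Z ⟶ V₁, s - l ≫ ε = d ≫ k := Triangle.coyoneda_exact₂ _ hQ _ hπ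
  refine ⟨E, hT _ _ _ _ _ _ hE hV₁ hV₂, l + d ≫ ι, ε, ?_⟩
  rw [Category.id_comp] at hιε
  rw [Preadditive.add_comp, Category.assoc, hιε, ← hd, add_sub_cancel]

theorem W'class_comp_general (R S : Set C)
    {X Y Z : C} (f : X ⟶ Y) (g : Y ⟶ Z)
    (hf : W'class R S f) (hg : W'class R S g) :
    W'class R S (f ≫ g) := by
  intro Z₀ r s hT
  obtain ⟨Z₁, r₁, s₁, hF⟩ := distinguished_cocone_triangle₁ f
  obtain ⟨Z₂, r₂, s₂, hG⟩ := distinguished_cocone_triangle₁ g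
  obtain ⟨hr₁, hs₁⟩ := hf Z₁ r₁ s₁ hF
  obtain ⟨hr₂, hs₂⟩ := hg Z₂ r₂ s₂ hG
  have hrfg : (r ≫ f) ≫ g = 0 :=
    (Category.assoc _ _ _).trans (comp_distTriang_mor_zero₁₂ _ hT)
  have hfgs : f ≫ g ≫ s = 0 :=
    (Category.assoc _ _ _).symm.trans (comp_distTriang_mor_zero₂₃ _ hT)
  obtain ⟨ψ, hψ⟩ : ∃ ψ : Z₀ ⟶ Z₂, r ≫ f = ψ ≫ r₂ := Triangle.coyoneda_exact₂ _ hG _ hrfg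
  obtain ⟨h, hh⟩ : ∃ h : Z₁⟦(1 : ℤ)⟧ ⟶ Z₀⟦(1 : ℤ)⟧, g ≫ s = s₁ ≫ h :=
    Triangle.yoneda_exact₃ _ hF _ hfgs
  exact ⟨factorsThruSet_of_comp_of_mor₁ (rperp_extensionClosed R) hF hr₁ r
      (hψ ▸ hr₂.comp_left ψ),
    factorsThruSet_of_comp_of_mor₃ (rperp_extensionClosed S) hG hs₂ s
      (hh ▸ hs₁.comp_right h)⟩

/-- The class `W'` is closed under composition. -/
theorem W'class_comp (R S : Set C)
    (hRcf : ContravariantlyFinite R) (hRec : ExtensionClosed R)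
    (hScf : ContravariantlyFinite S) (hSec : ExtensionClosed S)
    {X Y Z : C} (f : X ⟶ Y) (g : Y ⟶ Z)
    (hf : W'class R S f) (hg : W'class R S g) :
    W'class R S (f ≫ g) :=
  W'class_comp_general R S f g hf hg
end

section
/- Let C be a triangulated category, let R ⊆ S be full subcategories, and let W' be the class of morphisms w such that in any triangle Z --r--> X --w--> Y --s--> ΣZ, the morphism r factors through R^⊥ and s factors through S^⊥. If f : X → Y and g∘f both belong to W', then g belongs to W'. -/
open CategoryTheory CategoryTheory.Limits CategoryTheory.Pretriangulated
open CategoryTheory.Category CategoryTheory.Preadditive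

variable {C : Type*} [Category C] [Preadditive C] [HasZeroObject C]
  [HasShift C ℤ] [∀ n : ℤ, Functor.Additive (CategoryTheory.shiftFunctor C n)]
  [Pretriangulated C]

/-!
Let `K → Y → Z → ΣK` be a triangle on `g`. For `T ∈ R ⊆ S`, maps `T → Y` lift along `f` and
maps `T → X` killed by `f ≫ g` vanish, so every map `T → K` is killed by `r : K → Y`.
Complete the fibre `A → X` of `f ≫ g` to a morphism of triangles with `c : A → K`; then
`s = q ≫ Σc` inherits the `s`-part of `f ≫ g`. For `r`, factor the triangle maps of `f ≫ g` as
`A → U → X` and `Z → V → ΣA` with `U ∈ R^⊥`, `V ∈ S^⊥`. Then `r` factors through the homotopy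
pushout `P` of `K ← Σ⁻¹V → U`, and `P ∈ R^⊥`: maps from `T ∈ R` to `U` and to `ΣΣ⁻¹V ≅ V` vanish,
and every map `T → K`, being killed by `r`, factors through `Σ⁻¹s`, hence through `Σ⁻¹V`.
-/

section

omit [HasZeroObject C] [HasShift C ℤ] [∀ n : ℤ, Functor.Additive (CategoryTheory.shiftFunctor C n)]
  [Pretriangulated C]

theorem rperp_anti {T T' : Set C} (h : T ⊆ T') : rperp T' ⊆ rperp T :=
  fun _ hZ A hA => hZ A (h hA)

theorem rperp_of_iso {T : Set C} {Z Z' : C} (e : Z ≅ Z') (hZ : Z ∈ rperp T) : Z' ∈ rperp T :=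
  fun A hA x => by simpa using congrArg (· ≫ e.hom) (hZ A hA (x ≫ e.inv))

namespace FactorsThruSet

variable {X Y : C} {φ : X ⟶ Y}

omit [Preadditive C] in
theorem postcomp_s5 {S : Set C} (h : FactorsThruSet S φ) {Y' : C} (k : Y ⟶ Y') :
    FactorsThruSet S (φ ≫ k) := by
  obtain ⟨U, hU, a, b, rfl⟩ := h
  exact ⟨U, hU, a, b ≫ k, assoc _ _ _⟩

theorem comp_eq_zero {T : Set C} (h : FactorsThruSet (rperp T) φ) {A : C} (hA : A ∈ T)
    (x : A ⟶ X) : x ≫ φ = 0 := by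
  obtain ⟨U, hU, a, b, rfl⟩ := h
  rw [← assoc, hU A hA (x ≫ a), zero_comp]

end FactorsThruSet

end

theorem factorsThruSet_rperp_of_comm_sq (T : Set C) {W K U Y : C} (e : W ⟶ K) (u : W ⟶ U)
    (r : K ⟶ Y) (h : U ⟶ Y) (comm : e ≫ r = u ≫ h) (hU : U ∈ rperp T)
    (hW : W⟦(1:ℤ)⟧ ∈ rperp T) (he : ∀ A ∈ T, ∀ t : A ⟶ K, ∃ t' : A ⟶ W, t = t' ≫ e) :
    FactorsThruSet (rperp T) r := by
  obtain ⟨P, σ, τ, hP⟩ := distinguished_cocone_triangle (biprod.lift e (-u))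
  have hd : biprod.lift e (-u) ≫ biprod.desc r h = 0 := by
    rw [biprod.lift_desc, comm, neg_comp, add_neg_cancel]
  obtain ⟨θ, hθ⟩ : ∃ θ : P ⟶ Y, biprod.desc r h = σ ≫ θ := Triangle.yoneda_exact₂ _ hP _ hd
  refine ⟨P, ?_, biprod.inl ≫ σ, θ, by rw [assoc, ← hθ, biprod.inl_desc]⟩
  intro A hA x
  obtain ⟨w, rfl⟩ : ∃ w : A ⟶ K ⊞ U, x = w ≫ σ := Triangle.coyoneda_exact₃ _ hP x (hW A hA _)
  obtain ⟨t', ht'⟩ := he A hA (w ≫ biprod.fst)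
  have hw : w = t' ≫ biprod.lift e (-u) := by
    ext
    · simpa using ht'
    · simp [hU A hA (w ≫ biprod.snd), hU A hA (t' ≫ u)]
  have hσ : biprod.lift e (-u) ≫ σ = 0 := comp_distTriang_mor_zero₁₂ _ hP
  rw [hw, assoc, hσ, comp_zero]

namespace W'class

variable {R S : Set C} {X Y : C} {w : X ⟶ Y}

theorem exists_lift (hw : W'class R S w) {A : C} (hA : A ∈ S) (y : A ⟶ Y) :
    ∃ x : A ⟶ X, y = x ≫ w := by
  obtain ⟨Z, r, s, hZ⟩ := distinguished_cocone_triangle₁ w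
  exact Triangle.coyoneda_exact₃ (Triangle.mk r w s) hZ y ((hw Z r s hZ).2.comp_eq_zero hA y)

theorem eq_zero_of_comp_eq_zero (hw : W'class R S w) {A : C} (hA : A ∈ R) (x : A ⟶ X)
    (hx : x ≫ w = 0) : x = 0 := by
  obtain ⟨Z, r, s, hZ⟩ := distinguished_cocone_triangle₁ w
  obtain ⟨z, rfl⟩ := Triangle.coyoneda_exact₂ _ hZ x hx
  exact (hw Z r s hZ).1.comp_eq_zero hA z

end W'class

theorem W'class.comp_eq_zero_of_distTriang {R S : Set C} (hRS : R ⊆ S) {X Y Z K : C}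
    {f : X ⟶ Y} {g : Y ⟶ Z} (hf : W'class R S f) (hgf : W'class R S (f ≫ g))
    {r : K ⟶ Y} {s : Z ⟶ K⟦(1:ℤ)⟧} (hT : Triangle.mk r g s ∈ distTriang C)
    {A : C} (hA : A ∈ R) (t : A ⟶ K) : t ≫ r = 0 := by
  obtain ⟨x, hx⟩ := hf.exists_lift (hRS hA) (t ≫ r)
  have hrg : r ≫ g = 0 := comp_distTriang_mor_zero₁₂ _ hT
  have hx0 : x = 0 :=
    hgf.eq_zero_of_comp_eq_zero hA x (by rw [← assoc, ← hx, assoc, hrg, comp_zero])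
  rw [hx, hx0, zero_comp]

/-- If `R ⊆ S`, `f` and `g ∘ f` belong to `W'`, then `g` belongs to `W'`. -/
theorem W'class_of_comp_left (R S : Set C) (hRS : R ⊆ S)
    {X Y Z : C} (f : X ⟶ Y) (g : Y ⟶ Z)
    (hf : W'class R S f) (hgf : W'class R S (f ≫ g)) :
    W'class R S g := by
  intro K r s hT
  obtain ⟨A, p, q, hA⟩ := distinguished_cocone_triangle₁ (f ≫ g)
  obtain ⟨hp, hq⟩ := hgf A p q hA
  obtain ⟨c, hcr, hcs⟩ : ∃ c : A ⟶ K, p ≫ f = c ≫ r ∧ q ≫ c⟦(1:ℤ)⟧' = 𝟙 Z ≫ s :=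
    complete_distinguished_triangle_morphism₁ _ _ hA hT f (𝟙 Z) (comp_id _)
  rw [id_comp] at hcs
  refine ⟨?_, hcs ▸ hq.postcomp_s5 (c⟦(1:ℤ)⟧')⟩
  obtain ⟨U, hU, α, β, rfl⟩ := hp
  obtain ⟨V, hV, a, b, rfl⟩ := hq
  set b' : V⟦(-1:ℤ)⟧ ⟶ A :=
    b⟦(-1:ℤ)⟧' ≫ (shiftFunctorCompIsoId C (1:ℤ) (-1) (add_neg_cancel 1)).hom.app A
  refine factorsThruSet_rperp_of_comm_sq R (b' ≫ c) (b' ≫ α) r (β ≫ f) ?_ hU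
    (rperp_of_iso (shiftNegShift V (1:ℤ)).symm (rperp_anti hRS hV)) ?_
  · simp [b', ← hcr]
  · intro A' hA' t
    obtain ⟨t₀, ht₀⟩ : ∃ t₀ : A' ⟶ Z⟦(-1:ℤ)⟧,
        t = t₀ ≫ (-(s⟦(-1:ℤ)⟧' ≫
          (shiftFunctorCompIsoId C (1:ℤ) (-1) (add_neg_cancel 1)).hom.app K)) :=
      Triangle.coyoneda_exact₂ _ (inv_rot_of_distTriang _ hT) t
      (hf.comp_eq_zero_of_distTriang hRS hgf hT hA' t)
    refine ⟨-(t₀ ≫ a⟦(-1:ℤ)⟧'), ?_⟩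
    rw [ht₀, ← hcs]
    simp [b', shift_shift_neg']
end

section
/- Let C be a triangulated category with a contravariantly finite rigid full subcategory T, and let W be the class of morphisms f such that in any triangle Z → X --f--> Y → ΣZ both connecting morphisms factor through T^⊥. Then W satisfies the two-out-of-six property: for composable morphisms f, g, h, if g∘f and h∘g belong to W, then f, g, h, and h∘g∘f all belong to W. -/
open CategoryTheory CategoryTheory.Limits CategoryTheory.Pretriangulated

variable {C : Type*} [Category C] [Preadditive C] [HasZeroObject C]
  [HasShift C ℤ] [∀ n : ℤ, Functor.Additive (CategoryTheory.shiftFunctor C n)]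
  [Pretriangulated C]

/-- A subcategory `T` is rigid if `C(T, ΣT) = 0`. -/
def IsRigid (T : Set C) : Prop :=
  ∀ T' ∈ T, ∀ T'' ∈ T, ∀ (f : T' ⟶ (T'' : C)⟦(1:ℤ)⟧), f = 0

/-!
`W` is the class of morphisms `f` such that `C(T', f)` is bijective for every `T' ∈ T`:
in a distinguished triangle `Z → X → Y → ΣZ`, exactness of `C(T', -)` shows that `C(T', f)` is
injective (resp. surjective) iff `C(T', Z → X)` (resp. `C(T', Y → ΣZ)`) vanishes, and for a
rigid contravariantly finite `T`, a morphism killed by all maps from `T` factors through `T^⊥`,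
namely through the cone of a right `T`-approximation of its source. Two-out-of-six then holds
because it holds for isomorphisms in any category.
-/

namespace CategoryTheory

lemma IsIso.two_out_of_six {D : Type*} [Category D] {X Y Z W : D}
    (f : X ⟶ Y) (g : Y ⟶ Z) (h : Z ⟶ W) [IsIso (f ≫ g)] [IsIso (g ≫ h)] :
    IsIso f ∧ IsIso g ∧ IsIso h ∧ IsIso (f ≫ g ≫ h) := by
  have : IsSplitEpi g :=
    IsSplitEpi.mk' ⟨inv (f ≫ g) ≫ f, by rw [Category.assoc, IsIso.inv_hom_id]⟩
  have : IsSplitMono g :=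
    IsSplitMono.mk' ⟨h ≫ inv (g ≫ h), by rw [← Category.assoc, IsIso.hom_inv_id]⟩
  have : IsIso g := isIso_of_mono_of_isSplitEpi g
  have : IsIso f := IsIso.of_isIso_comp_right f g
  have : IsIso h := IsIso.of_isIso_comp_left g h
  exact ⟨inferInstance, inferInstance, inferInstance, inferInstance⟩

namespace Pretriangulated

variable {τ : Triangle C}

lemma injective_comp_mor₂_iff (hτ : τ ∈ distTriang C) (A : C) :
    Function.Injective (fun u : A ⟶ τ.obj₂ => u ≫ τ.mor₂) ↔
      ∀ u : A ⟶ τ.obj₁, u ≫ τ.mor₁ = 0 := by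
  change Function.Injective (Preadditive.rightComp A τ.mor₂) ↔ _
  rw [injective_iff_map_eq_zero]
  constructor
  · intro hinj u
    exact hinj _ (by simp [Preadditive.rightComp, comp_distTriang_mor_zero₁₂ _ hτ])
  · intro hzero u hu
    obtain ⟨w, rfl⟩ := Triangle.coyoneda_exact₂ τ hτ u hu
    exact hzero w

lemma surjective_comp_mor₂_iff (hτ : τ ∈ distTriang C) (A : C) :
    Function.Surjective (fun u : A ⟶ τ.obj₂ => u ≫ τ.mor₂) ↔
      ∀ v : A ⟶ τ.obj₃, v ≫ τ.mor₃ = 0 := by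
  constructor
  · intro hsurj v
    obtain ⟨u, rfl⟩ := hsurj v
    simp [comp_distTriang_mor_zero₂₃ _ hτ]
  · intro hzero v
    obtain ⟨u, hu⟩ := Triangle.coyoneda_exact₃ τ hτ v (hzero v)
    exact ⟨u, hu.symm⟩

variable {T : Set C}

lemma obj₃_mem_rperp (hrig : IsRigid T) (hτ : τ ∈ distTriang C) (h₁ : τ.obj₁ ∈ T)
    (happrox : ∀ T' ∈ T, ∀ u : T' ⟶ τ.obj₂, ∃ v : T' ⟶ τ.obj₁, v ≫ τ.mor₁ = u) :
    τ.obj₃ ∈ rperp T := by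
  intro T' hT' m
  obtain ⟨t, rfl⟩ := Triangle.coyoneda_exact₃ τ hτ m (hrig T' hT' _ h₁ _)
  obtain ⟨v, rfl⟩ := happrox T' hT' t
  simp [comp_distTriang_mor_zero₁₂ _ hτ]

end Pretriangulated

end CategoryTheory

lemma comp_eq_zero_of_factorsThruSet_rperp {D : Type*} [Category D] [Preadditive D]
    {T : Set D} {A B : D} {r : A ⟶ B} (hr : FactorsThruSet (rperp T) r)
    {T' : D} (hT' : T' ∈ T) (u : T' ⟶ A) : u ≫ r = 0 := by
  obtain ⟨U, hU, a, b, rfl⟩ := hr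
  rw [← Category.assoc, hU T' hT' (u ≫ a), zero_comp]

section

open Pretriangulated

variable {T : Set C}

lemma factorsThruSet_rperp_iff (hcf : ContravariantlyFinite T) (hrig : IsRigid T)
    {A B : C} (r : A ⟶ B) :
    FactorsThruSet (rperp T) r ↔ ∀ T' ∈ T, ∀ u : T' ⟶ A, u ≫ r = 0 := by
  refine ⟨fun hr _ hT' u => comp_eq_zero_of_factorsThruSet_rperp hr hT' u, fun hr => ?_⟩
  obtain ⟨T₀, hT₀, p, happrox⟩ := hcf A
  obtain ⟨U, q, d, hτ⟩ := distinguished_cocone_triangle p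
  obtain ⟨r', hr'⟩ := Triangle.yoneda_exact₂ _ hτ r (hr T₀ hT₀ p)
  exact ⟨U, obj₃_mem_rperp hrig hτ hT₀ happrox, q, r', hr'⟩

lemma factorsThruSet_rperp_mor₁_and_mor₃_iff (hcf : ContravariantlyFinite T) (hrig : IsRigid T)
    {τ : Triangle C} (hτ : τ ∈ distTriang C) :
    FactorsThruSet (rperp T) τ.mor₁ ∧ FactorsThruSet (rperp T) τ.mor₃ ↔
      ∀ A ∈ T, Function.Bijective (fun u : A ⟶ τ.obj₂ => u ≫ τ.mor₂) := by
  simp only [factorsThruSet_rperp_iff hcf hrig, Function.Bijective, injective_comp_mor₂_iff hτ,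
    surjective_comp_mor₂_iff hτ]
  exact forall₂_and.symm

lemma Wclass_iff_isIso_coyoneda_map (hcf : ContravariantlyFinite T) (hrig : IsRigid T)
    {X Y : C} (f : X ⟶ Y) :
    Wclass T f ↔ ∀ A ∈ T, IsIso ((coyoneda.obj (Opposite.op A)).map f) := by
  simp only [isIso_iff_bijective]
  constructor
  · intro hf
    obtain ⟨Z, r, s, hτ⟩ := distinguished_cocone_triangle₁ f
    exact (factorsThruSet_rperp_mor₁_and_mor₃_iff hcf hrig hτ).1 (hf Z r s hτ)
  · intro hf Z r s hτ
    exact (factorsThruSet_rperp_mor₁_and_mor₃_iff hcf hrig hτ).2 hf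

end

/-- The class `W` satisfies the two-out-of-six property. -/
theorem Wclass_two_out_of_six (T : Set C)
    (hcf : ContravariantlyFinite T) (hrig : IsRigid T)
    {X Y Z W : C} (f : X ⟶ Y) (g : Y ⟶ Z) (h : Z ⟶ W)
    (hgf : Wclass T (f ≫ g)) (hhg : Wclass T (g ≫ h)) :
    Wclass T f ∧ Wclass T g ∧ Wclass T h ∧ Wclass T (f ≫ g ≫ h) := by
  simp only [Wclass_iff_isIso_coyoneda_map hcf hrig, Functor.map_comp] at hgf hhg ⊢
  have key := fun A (hA : A ∈ T) =>
    have := hgf A hA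
    have := hhg A hA
    IsIso.two_out_of_six ((coyoneda.obj (Opposite.op A)).map f) ((coyoneda.obj _).map g)
      ((coyoneda.obj _).map h)
  exact ⟨fun A hA => (key A hA).1, fun A hA => (key A hA).2.1, fun A hA => (key A hA).2.2.1,
    fun A hA => (key A hA).2.2.2⟩
end

section
/- Let C be a triangulated category and T a contravariantly finite rigid full subcategory. Then a morphism f : X → Y in C satisfies C(T', f) = 0 for all T' in T (i.e., for every T' in T and every morphism u : T' → X, f∘u = 0) if and only if f factors through some object of T^⊥. -/
open CategoryTheory CategoryTheory.Limits CategoryTheory.Pretriangulated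

variable {C : Type*} [Category C] [Preadditive C] [HasZeroObject C]
  [HasShift C ℤ] [∀ n : ℤ, Functor.Additive (CategoryTheory.shiftFunctor C n)]
  [Pretriangulated C]

/- A map `T' ⟶ X'` dies in `T₀⟦1⟧` by rigidity, so it lifts to `X`, hence factors through the
approximation `p`, and `p ≫ g = 0`. -/
lemma mem_rperp_of_distTriang_of_isRigid {T : Set C} (hrig : IsRigid T)
    {T₀ X X' : C} (hT₀ : T₀ ∈ T) (p : T₀ ⟶ X) (g : X ⟶ X') (h : X' ⟶ T₀⟦(1:ℤ)⟧)
    (hp : ∀ T' ∈ T, ∀ (u : T' ⟶ X), ∃ v : T' ⟶ T₀, v ≫ p = u)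
    (hdist : Triangle.mk p g h ∈ distTriang C) :
    X' ∈ rperp T := by
  intro T' hT' u
  obtain ⟨v, rfl⟩ := Triangle.coyoneda_exact₃ _ hdist u (hrig T' hT' T₀ hT₀ _)
  obtain ⟨w, rfl⟩ := hp T' hT' v
  have hpg : p ≫ g = 0 := comp_distTriang_mor_zero₁₂ _ hdist
  change (w ≫ p) ≫ g = 0
  rw [Category.assoc, hpg, comp_zero]

lemma exists_distTriang_rperp {T : Set C} (hcf : ContravariantlyFinite T) (hrig : IsRigid T)
    (X : C) :
    ∃ T₀ ∈ T, ∃ X' ∈ rperp T, ∃ (p : T₀ ⟶ X) (g : X ⟶ X') (h : X' ⟶ T₀⟦(1:ℤ)⟧),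
      Triangle.mk p g h ∈ distTriang C := by
  obtain ⟨T₀, hT₀, p, hp⟩ := hcf X
  obtain ⟨X', g, h, hdist⟩ := distinguished_cocone_triangle p
  exact ⟨T₀, hT₀, X', mem_rperp_of_distTriang_of_isRigid hrig hT₀ p g h hp hdist, p, g, h, hdist⟩

/-- A morphism `f` is killed by `C(T', -)` for all `T'` in `T` if and only if it factors
through an object of `T^⊥`. -/
theorem factors_through_perp_iff (T : Set C)
    (hcf : ContravariantlyFinite T) (hrig : IsRigid T)
    {X Y : C} (f : X ⟶ Y) :
    (∀ T' ∈ T, ∀ (u : T' ⟶ X), u ≫ f = 0) ↔ FactorsThruSet (rperp T) f := by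
  constructor
  · intro hf
    obtain ⟨T₀, hT₀, X', hX', p, g, h, hdist⟩ := exists_distTriang_rperp hcf hrig X
    obtain ⟨b, hb⟩ := Triangle.yoneda_exact₂ _ hdist f (hf T₀ hT₀ p)
    exact ⟨X', hX', g, b, hb⟩
  · rintro ⟨U, hU, a, b, rfl⟩ T' hT' u
    rw [← Category.assoc, hU T' hT' (u ≫ a), zero_comp]
end

section
/- Let C be a triangulated category and T a contravariantly finite rigid full subcategory. A morphism f : X → Y has the right lifting property with respect to all morphisms 0 → ΣT' (T' in T) if and only if the cone of f factors through an object of Σ(T^⊥). -/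
open CategoryTheory CategoryTheory.Limits CategoryTheory.Pretriangulated

variable {C : Type*} [Category C] [Preadditive C] [HasZeroObject C]
  [HasShift C ℤ] [∀ n : ℤ, Functor.Additive (CategoryTheory.shiftFunctor C n)]
  [Pretriangulated C]

open ZeroObject

/-- `f` factors through the shift of an object of the set `S`. -/
def FactorsThruShiftSet (S : Set C) {X Y : C} (f : X ⟶ Y) : Prop :=
  ∃ U ∈ S, ∃ (a : X ⟶ (U⟦(1:ℤ)⟧)) (b : (U⟦(1:ℤ)⟧) ⟶ Y), f = a ≫ b

/-!
Via the triangle, `f` has the lifting property against `0 ⟶ ΣT'` iff `g` kills every map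
`ΣT' ⟶ Y`. If `g` factors through `ΣU` with `U ∈ T^⊥`, these composites vanish because `Σ` is
full. Conversely, complete a right `T`-approximation `T₀ ⟶ Σ⁻¹Y` to a triangle
`T₀ ⟶ Σ⁻¹Y ⟶ U ⟶ ΣT₀`; rigidity of `T` puts `U` in `T^⊥`, and since `g` kills `ΣT₀ ⟶ Y`, the
shifted triangle makes `g` factor through `ΣU`.
-/

lemma hasLiftingProperty_zero_iff {D : Type*} [Category D] [HasZeroMorphisms D]
    [HasZeroObject D] {A X Y : D} (f : X ⟶ Y) :
    HasLiftingProperty (0 : (0 : D) ⟶ A) f ↔ ∀ b : A ⟶ Y, ∃ l : A ⟶ X, l ≫ f = b := by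
  constructor
  · intro _ b
    have sq : CommSq (0 : (0 : D) ⟶ X) 0 f b := ⟨(isZero_zero D).eq_of_src _ _⟩
    exact ⟨sq.lift, sq.fac_right⟩
  · refine fun hf => ⟨fun {_ b} _ => ?_⟩
    obtain ⟨l, hl⟩ := hf b
    exact ⟨⟨⟨l, (isZero_zero D).eq_of_src _ _, hl⟩⟩⟩

lemma hasLiftingProperty_zero_iff_forall_comp_eq_zero {A X Y Z : C} {f : X ⟶ Y} {g : Y ⟶ Z}
    {h : Z ⟶ X⟦(1:ℤ)⟧} (htri : Triangle.mk f g h ∈ distTriang C) :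
    HasLiftingProperty (0 : (0 : C) ⟶ A) f ↔ ∀ b : A ⟶ Y, b ≫ g = 0 := by
  rw [hasLiftingProperty_zero_iff]
  refine forall_congr' fun b => ⟨?_, fun hb => ?_⟩
  · rintro ⟨l, rfl⟩
    rw [Category.assoc, show f ≫ g = 0 from comp_distTriang_mor_zero₁₂ _ htri, comp_zero]
  · obtain ⟨l, hl⟩ := Triangle.coyoneda_exact₂ _ htri b hb
    exact ⟨l, hl.symm⟩

lemma cocone_mem_rperp {T : Set C} (hrig : IsRigid T) {T₀ Z U : C} (hT₀ : T₀ ∈ T)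
    {t : T₀ ⟶ Z} (happ : ∀ T' ∈ T, ∀ u : T' ⟶ Z, ∃ v : T' ⟶ T₀, v ≫ t = u)
    {q : Z ⟶ U} {s : U ⟶ T₀⟦(1:ℤ)⟧} (hTr : Triangle.mk t q s ∈ distTriang C) :
    U ∈ rperp T := by
  intro T' hT' u
  obtain ⟨w, rfl⟩ := Triangle.coyoneda_exact₃ _ hTr u (hrig T' hT' T₀ hT₀ _)
  obtain ⟨v, rfl⟩ := happ T' hT' w
  change (v ≫ t) ≫ q = 0
  rw [Category.assoc, show t ≫ q = 0 from comp_distTriang_mor_zero₁₂ _ hTr, comp_zero]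

lemma exists_distTriang_mem_rperp {T : Set C} (hcf : ContravariantlyFinite T)
    (hrig : IsRigid T) (Z : C) :
    ∃ T₀ ∈ T, ∃ U ∈ rperp T, ∃ (t : T₀ ⟶ Z) (q : Z ⟶ U) (s : U ⟶ T₀⟦(1:ℤ)⟧),
      Triangle.mk t q s ∈ distTriang C := by
  obtain ⟨T₀, hT₀, t, happ⟩ := hcf Z
  obtain ⟨U, q, s, hTr⟩ := distinguished_cocone_triangle t
  exact ⟨T₀, hT₀, U, cocone_mem_rperp hrig hT₀ happ hTr, t, q, s, hTr⟩

lemma exists_shift_map_comp_eq_of_shift_map_comp_eq_zero {A Z U W : C} {t : A ⟶ Z}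
    {q : Z ⟶ U} {s : U ⟶ A⟦(1:ℤ)⟧} (hTr : Triangle.mk t q s ∈ distTriang C) (n : ℤ)
    (φ : Z⟦n⟧ ⟶ W) (hφ : t⟦n⟧' ≫ φ = 0) : ∃ b : U⟦n⟧ ⟶ W, q⟦n⟧' ≫ b = φ := by
  obtain ⟨b, hb⟩ : ∃ b : U⟦n⟧ ⟶ W, φ = (n.negOnePow • q⟦n⟧') ≫ b :=
    Triangle.yoneda_exact₂ _ (Triangle.shift_distinguished _ hTr n) φ (by
      change (n.negOnePow • t⟦n⟧') ≫ φ = 0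
      rw [Linear.units_smul_comp, hφ, smul_zero])
  refine ⟨n.negOnePow • b, ?_⟩
  rw [hb, Linear.units_smul_comp, Linear.comp_units_smul]

omit [HasZeroObject C] [Pretriangulated C] in
lemma comp_eq_zero_of_factorsThruShiftSet_rperp {T : Set C} {Y W : C} {g : Y ⟶ W}
    (hg : FactorsThruShiftSet (rperp T) g) {T' : C} (hT' : T' ∈ T) (b : T'⟦(1:ℤ)⟧ ⟶ Y) :
    b ≫ g = 0 := by
  obtain ⟨U, hU, a, c, rfl⟩ := hg
  obtain ⟨d, hd⟩ := (shiftFunctor C (1:ℤ)).map_surjective (b ≫ a)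
  rw [← Category.assoc, ← hd, hU T' hT' d, Functor.map_zero, zero_comp]

lemma factorsThruShiftSet_rperp_of_forall_comp_eq_zero {T : Set C}
    (hcf : ContravariantlyFinite T) (hrig : IsRigid T) {Y W : C} (g : Y ⟶ W)
    (hg : ∀ T' ∈ T, ∀ b : T'⟦(1:ℤ)⟧ ⟶ Y, b ≫ g = 0) :
    FactorsThruShiftSet (rperp T) g := by
  obtain ⟨T₀, hT₀, U, hU, t, q, s, hTr⟩ := exists_distTriang_mem_rperp hcf hrig (Y⟦(-1:ℤ)⟧)
  let e : (Y⟦(-1:ℤ)⟧)⟦(1:ℤ)⟧ ≅ Y := (shiftFunctorCompIsoId C (-1) 1 (by omega)).app Y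
  obtain ⟨b, hb⟩ := exists_shift_map_comp_eq_of_shift_map_comp_eq_zero hTr 1 (e.hom ≫ g)
    (by rw [← Category.assoc, hg T₀ hT₀])
  exact ⟨U, hU, e.inv ≫ q⟦(1:ℤ)⟧', b, by rw [Category.assoc, hb, e.inv_hom_id_assoc]⟩

/-- A morphism `f` has the right lifting property with respect to all `0 ⟶ ΣT'`
(`T' ∈ T`) if and only if its cone factors through `Σ(T^⊥)`. -/
theorem rlp_J_iff_cone_factors (T : Set C)
    (hcf : ContravariantlyFinite T) (hrig : IsRigid T)
    {X Y Cf : C} (f : X ⟶ Y) (g : Y ⟶ Cf) (h : Cf ⟶ X⟦(1:ℤ)⟧)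
    (htri : Triangle.mk f g h ∈ distTriang C) :
    (∀ T' ∈ T, HasLiftingProperty (0 : (0 : C) ⟶ (T' : C)⟦(1:ℤ)⟧) f) ↔
      FactorsThruShiftSet (rperp T) g := by
  simp only [hasLiftingProperty_zero_iff_forall_comp_eq_zero htri]
  exact ⟨factorsThruShiftSet_rperp_of_forall_comp_eq_zero hcf hrig g,
    fun hg _ hT' => comp_eq_zero_of_factorsThruShiftSet_rperp hg hT'⟩
end

section
/- Let C be a triangulated category and T a contravariantly finite rigid full subcategory closed under direct summands. A morphism has the left lifting property with respect to every morphism in J^□ (where J = {0 → ΣT' : T' in T}) if and only if it is isomorphic in the arrow category to a coprojection X → X ⊕ ΣT' for some X in C and T' in T. -/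
open CategoryTheory CategoryTheory.Limits CategoryTheory.Pretriangulated

variable {C : Type*} [Category C] [Preadditive C] [HasZeroObject C]
  [HasShift C ℤ] [∀ n : ℤ, Functor.Additive (CategoryTheory.shiftFunctor C n)]
  [Pretriangulated C]

open ZeroObject

/-- A subcategory is closed under direct summands. -/
def ClosedUnderSummands (T : Set C) : Prop :=
  ∀ (X S : C) (i : X ⟶ S) (r : S ⟶ X), i ≫ r = 𝟙 X → S ∈ T → X ∈ T

/-- A subcategory is strictly full (closed under isomorphisms). -/
def ClosedUnderIso (T : Set C) : Prop :=
  ∀ X Y : C, (X ≅ Y) → X ∈ T → Y ∈ T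

/-!
If `s : ΣT₀ ⟶ Y` is a `ΣT`-approximation of `Y`, then `[f, s] : X ⊞ ΣT₀ ⟶ Y` lies in `J^□`, and
it factors `f` through the coprojection `X ⟶ X ⊞ ΣT₀`. A morphism lifting against `[f, s]` is
therefore a retract of that coprojection. In a pretriangulated category a retract of a coprojection
`X' ⟶ X' ⊞ A` is a monomorphism, hence a coprojection `X ⟶ X ⊞ Z` onto its cone `Z`, and `Z` is a
retract of `A`; so `Z = ΣT'` with `T'` a summand of `T₀`. Conversely, a coprojection onto `ΣT'`
lifts against `g` as soon as `0 ⟶ ΣT'` does.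
-/

section Coprojection

variable {D : Type*} [Category D] [HasZeroMorphisms D] [HasZeroObject D]

lemma hasLiftingProperty_zero_left_iff {A Z W : D} (g : Z ⟶ W) :
    HasLiftingProperty (0 : (0 : D) ⟶ A) g ↔ ∀ b : A ⟶ W, ∃ l : A ⟶ Z, l ≫ g = b := by
  refine ⟨fun _ b ↦ ?_, fun h ↦ ⟨fun {_ b} _ ↦ ?_⟩⟩
  · have sq : CommSq (0 : (0 : D) ⟶ Z) 0 g b := ⟨(isZero_zero D).eq_of_src _ _⟩
    exact ⟨sq.lift, sq.fac_right⟩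
  · obtain ⟨l, hl⟩ := h b
    exact ⟨⟨⟨l, (isZero_zero D).eq_of_src _ _, hl⟩⟩⟩

lemma hasLiftingProperty_biprod_desc {X Y A B : D} [HasBinaryBiproduct X A]
    (f : X ⟶ Y) (s : A ⟶ Y) (hs : ∀ b : B ⟶ Y, ∃ v : B ⟶ A, v ≫ s = b) :
    HasLiftingProperty (0 : (0 : D) ⟶ B) (biprod.desc f s) :=
  (hasLiftingProperty_zero_left_iff _).2 fun b ↦
    let ⟨v, hv⟩ := hs b
    ⟨v ≫ biprod.inr, by simp [hv]⟩

instance hasLiftingProperty_biprod_inl {X A Z W : D} [HasBinaryBiproduct X A] (g : Z ⟶ W)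
    [HasLiftingProperty (0 : (0 : D) ⟶ A) g] :
    HasLiftingProperty (biprod.inl : X ⟶ X ⊞ A) g where
  sq_hasLift {a b} sq := by
    obtain ⟨l, hl⟩ := (hasLiftingProperty_zero_left_iff g).1 inferInstance (biprod.inr ≫ b)
    exact ⟨⟨⟨biprod.desc a l, by simp, by ext <;> simp [sq.w, hl]⟩⟩⟩

noncomputable def biprodInlArrowIso (X : D) {A B : D} [HasBinaryBiproduct X A]
    [HasBinaryBiproduct X B] (e : A ≅ B) :
    Arrow.mk (biprod.inl : X ⟶ X ⊞ A) ≅ Arrow.mk (biprod.inl : X ⟶ X ⊞ B) :=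
  Arrow.isoMk (Iso.refl X) (biprod.mapIso (Iso.refl X) e) (by simp)

end Coprojection

lemma ContravariantlyFinite.exists_shift_approximation {D : Type*} [Category D] [HasShift D ℤ]
    {T : Set D} (hcf : ContravariantlyFinite T) (Y : D) :
    ∃ T₀ ∈ T, ∃ s : T₀⟦(1 : ℤ)⟧ ⟶ Y,
      ∀ T' ∈ T, ∀ u : T'⟦(1 : ℤ)⟧ ⟶ Y, ∃ v : T'⟦(1 : ℤ)⟧ ⟶ T₀⟦(1 : ℤ)⟧, v ≫ s = u := by
  obtain ⟨T₀, hT₀, p, hp⟩ := hcf (Y⟦(-1 : ℤ)⟧)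
  refine ⟨T₀, hT₀, p⟦(1 : ℤ)⟧' ≫ (shiftNegShift Y (1 : ℤ)).hom, fun T' hT' u ↦ ?_⟩
  obtain ⟨w, hw⟩ := (shiftFunctor D (1 : ℤ)).map_surjective (u ≫ (shiftNegShift Y (1 : ℤ)).inv)
  obtain ⟨v, rfl⟩ := hp T' hT' w
  exact ⟨v⟦(1 : ℤ)⟧', by
    rw [← Functor.map_comp_assoc, hw, Category.assoc, Iso.inv_hom_id, Category.comp_id]⟩

namespace CategoryTheory.Pretriangulated.Triangle

noncomputable def retractObj₃OfRetractArrow {T₁ T₂ : Triangle C}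
    (hT₁ : T₁ ∈ distTriang C) (hT₂ : T₂ ∈ distTriang C) (h : RetractArrow T₁.mor₁ T₂.mor₁) :
    Retract T₁.obj₃ T₂.obj₃ :=
  let φ := completeDistinguishedTriangleMorphism T₁ T₂ hT₁ hT₂ h.i.left h.i.right h.i.w.symm
  let ψ := completeDistinguishedTriangleMorphism T₂ T₁ hT₂ hT₁ h.r.left h.r.right h.r.w.symm
  have h₁ : (φ ≫ ψ).hom₁ = 𝟙 _ := h.retract_left
  have h₂ : (φ ≫ ψ).hom₂ = 𝟙 _ := h.retract_right
  have : IsIso (φ ≫ ψ).hom₃ :=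
    isIso₃_of_isIso₁₂ (φ ≫ ψ) hT₁ hT₁ (by rw [h₁]; infer_instance) (by rw [h₂]; infer_instance)
  { i := φ.hom₃
    r := ψ.hom₃ ≫ inv (φ ≫ ψ).hom₃
    retract := by simp [← Category.assoc] }

lemma nonempty_arrowIso_biprod_inl {T : Triangle C} [HasBinaryBiproducts C]
    (hT : T ∈ distTriang C) (hmono : Mono T.mor₁) :
    Nonempty (Arrow.mk T.mor₁ ≅ Arrow.mk (biprod.inl : T.obj₁ ⟶ T.obj₁ ⊞ T.obj₃)) := by
  obtain ⟨e, he, -⟩ := exists_iso_binaryBiproduct_of_distTriang T hT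
    (T.mor₃_eq_zero_of_mono₁ hT hmono)
  exact ⟨Arrow.isoMk (Iso.refl _) e (by simp [he])⟩

end CategoryTheory.Pretriangulated.Triangle

theorem llp_Jrlp_iff_coprojection_general [HasBinaryBiproducts C] (T : Set C)
    (hcf : ContravariantlyFinite T)
    (hsumm : ClosedUnderSummands T)
    {X Y : C} (f : X ⟶ Y) :
    (∀ ⦃Z W : C⦄ (g : Z ⟶ W),
        (∀ T' ∈ T, HasLiftingProperty (0 : (0 : C) ⟶ (T' : C)⟦(1:ℤ)⟧) g) →
        HasLiftingProperty f g) ↔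
      ∃ (X'' T' : C), T' ∈ T ∧
        Nonempty (Arrow.mk f ≅ Arrow.mk (biprod.inl : X'' ⟶ X'' ⊞ ((T' : C)⟦(1:ℤ)⟧))) := by
  constructor
  · intro H
    obtain ⟨T₀, hT₀, s, hs⟩ := hcf.exists_shift_approximation Y
    have : HasLiftingProperty f (biprod.desc f s) :=
      H _ fun T' hT' ↦ hasLiftingProperty_biprod_desc f s (hs T' hT')
    have hf : RetractArrow f (biprod.inl : X ⟶ X ⊞ T₀⟦(1 : ℤ)⟧) :=
      .ofLeftLiftingProperty (biprod.inl_desc f s)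
    have hmono : Mono f := (MorphismProperty.monomorphisms C).of_retract hf (inferInstance : Mono _)
    obtain ⟨Z, g, h, hZ⟩ := distinguished_cocone_triangle f
    have hZT₀ : Retract Z (T₀⟦(1 : ℤ)⟧) :=
      Triangle.retractObj₃OfRetractArrow hZ (binaryBiproductTriangle_distinguished _ _) hf
    have hZT₀' : Retract (Z⟦(-1 : ℤ)⟧) T₀ :=
      (hZT₀.map (shiftFunctor C (-1 : ℤ))).trans (shiftShiftNeg T₀ (1 : ℤ)).retract
    obtain ⟨e⟩ := Triangle.nonempty_arrowIso_biprod_inl hZ hmono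
    exact ⟨X, Z⟦(-1 : ℤ)⟧, hsumm _ _ hZT₀'.i hZT₀'.r hZT₀'.retract hT₀,
      ⟨e ≪≫ biprodInlArrowIso X (shiftNegShift Z (1 : ℤ)).symm⟩⟩
  · rintro ⟨X'', T', hT', ⟨e⟩⟩ Z W g hg
    have := hg T' hT'
    exact HasLiftingProperty.of_arrow_iso_left e.symm g

/-- A morphism lies in `^□(J^□)`, where `J = {0 → ΣT' : T' ∈ T}`, if and only if it is
isomorphic in the arrow category to a coprojection `X'' ⟶ X'' ⊞ ΣT'` for some `T' ∈ T`. -/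
theorem llp_Jrlp_iff_coprojection [HasBinaryBiproducts C] (T : Set C)
    (hcf : ContravariantlyFinite T) (hrig : IsRigid T)
    (hiso : ClosedUnderIso T) (hsumm : ClosedUnderSummands T)
    {X Y : C} (f : X ⟶ Y) :
    (∀ ⦃Z W : C⦄ (g : Z ⟶ W),
        (∀ T' ∈ T, HasLiftingProperty (0 : (0 : C) ⟶ (T' : C)⟦(1:ℤ)⟧) g) →
        HasLiftingProperty f g) ↔
      ∃ (X'' T' : C), T' ∈ T ∧
        Nonempty (Arrow.mk f ≅ Arrow.mk (biprod.inl : X'' ⟶ X'' ⊞ ((T' : C)⟦(1:ℤ)⟧))) :=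
  llp_Jrlp_iff_coprojection_general T hcf hsumm f
end

section
/- Let C be a triangulated category and T a contravariantly finite rigid full subcategory. Every morphism f : X → Y in C factors as X → X ⊕ ΣT₁ → Y where the first morphism is the coprojection [1,0]^t, T₁ is in T, and the second morphism [f, α] (with α : ΣT₁ → Y a right ΣT-approximation of Y) has cone factoring through Σ(T^⊥). -/
open CategoryTheory CategoryTheory.Limits CategoryTheory.Pretriangulated

variable {C : Type*} [Category C] [Preadditive C] [HasZeroObject C]
  [HasShift C ℤ] [∀ n : ℤ, Functor.Additive (CategoryTheory.shiftFunctor C n)]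
  [Pretriangulated C]

/-!
Take for `α` the shift of a right `T`-approximation of `Y⟦-1⟧` and complete it to a triangle
`ΣT₁ → Y → Z → Σ²T₁`. A morphism `ΣT' → Z` composed to `Σ²T₁` vanishes by rigidity, so it lifts
to `Y`, hence factors through `α`, and therefore vanishes; thus `Z⟦-1⟧ ∈ T^⊥`. A cone morphism
`g` of `[f, α]` kills `α`, so it factors through `Y → Z`.
-/

def IsShiftedRightApprox (T : Set C) {T₁ Y : C} (α : T₁⟦(1:ℤ)⟧ ⟶ Y) : Prop :=
  ∀ T' ∈ T, ∀ u : T'⟦(1:ℤ)⟧ ⟶ Y, ∃ v, v ≫ α = u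

omit [Preadditive C] [HasZeroObject C] [∀ n : ℤ, Functor.Additive (shiftFunctor C n)]
  [Pretriangulated C] in
theorem ContravariantlyFinite.exists_isShiftedRightApprox {T : Set C}
    (hcf : ContravariantlyFinite T) (Y : C) :
    ∃ T₁ ∈ T, ∃ α : T₁⟦(1:ℤ)⟧ ⟶ Y, IsShiftedRightApprox T α := by
  let adj : shiftFunctor C (1:ℤ) ⊣ shiftFunctor C (-1) := (shiftEquiv C 1).toAdjunction
  obtain ⟨T₁, hT₁, p, hp⟩ := hcf (Y⟦(-1:ℤ)⟧)
  refine ⟨T₁, hT₁, (adj.homEquiv _ _).symm p, fun T' hT' u => ?_⟩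
  obtain ⟨v, hv⟩ := hp T' hT' (adj.homEquiv _ _ u)
  exact ⟨v⟦(1:ℤ)⟧', by
    rw [← adj.homEquiv_naturality_left_symm, hv, Equiv.symm_apply_apply]⟩

omit [HasZeroObject C] [Pretriangulated C] in
theorem shift_neg_one_mem_rperp {T : Set C} {Z : C}
    (hZ : ∀ T' ∈ T, ∀ w : T'⟦(1:ℤ)⟧ ⟶ Z, w = 0) : Z⟦(-1:ℤ)⟧ ∈ rperp T := by
  intro T' hT' w
  let adj : shiftFunctor C (1:ℤ) ⊣ shiftFunctor C (-1) := (shiftEquiv C 1).toAdjunction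
  apply (adj.homEquiv _ _).symm.injective
  rw [hZ T' hT' ((adj.homEquiv _ _).symm w), adj.homEquiv_counit, Functor.map_zero, zero_comp]

theorem IsShiftedRightApprox.hom_cone_eq_zero {T : Set C} (hrig : IsRigid T) {T₁ Y Z : C}
    (hT₁ : T₁ ∈ T) {α : T₁⟦(1:ℤ)⟧ ⟶ Y} (hα : IsShiftedRightApprox T α)
    {q : Y ⟶ Z} {r : Z ⟶ T₁⟦(1:ℤ)⟧⟦(1:ℤ)⟧} (hZ : Triangle.mk α q r ∈ distTriang C)
    {T' : C} (hT' : T' ∈ T) (w : T'⟦(1:ℤ)⟧ ⟶ Z) : w = 0 := by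
  have hwr : w ≫ r = 0 := by
    obtain ⟨m, hm⟩ := (shiftFunctor C (1:ℤ)).map_surjective (w ≫ r)
    rw [← hm, hrig T' hT' T₁ hT₁ m, Functor.map_zero]
  obtain ⟨w', rfl⟩ : ∃ w' : T'⟦(1:ℤ)⟧ ⟶ Y, w = w' ≫ q :=
    Triangle.coyoneda_exact₃ _ hZ w hwr
  obtain ⟨v, rfl⟩ := hα T' hT' w'
  have hαq : α ≫ q = 0 := comp_distTriang_mor_zero₁₂ _ hZ
  rw [Category.assoc, hαq, comp_zero]

/-- Every morphism `f : X ⟶ Y` factors as the coprojection `X ⟶ X ⊞ ΣT₁` followed by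
`[f, α]`, where `α : ΣT₁ ⟶ Y` is a right `ΣT`-approximation of `Y` and the cone of
`[f, α]` factors through `Σ(T^⊥)`. -/
theorem first_factorisation [HasBinaryBiproducts C] (T : Set C)
    (hcf : ContravariantlyFinite T) (hrig : IsRigid T)
    {X Y : C} (f : X ⟶ Y) :
    ∃ T₁ ∈ T, ∃ (α : ((T₁ : C)⟦(1:ℤ)⟧) ⟶ Y),
      (∀ T' ∈ T, ∀ (u : ((T' : C)⟦(1:ℤ)⟧) ⟶ Y), ∃ v, v ≫ α = u) ∧
      biprod.inl ≫ biprod.desc f α = f ∧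
      ∀ (Cg : C) (g : Y ⟶ Cg) (h : Cg ⟶ (X ⊞ ((T₁ : C)⟦(1:ℤ)⟧))⟦(1:ℤ)⟧),
        (Triangle.mk (biprod.desc f α) g h ∈ distTriang C) →
          FactorsThruShiftSet (rperp T) g := by
  obtain ⟨T₁, hT₁, α, hα⟩ := hcf.exists_isShiftedRightApprox Y
  refine ⟨T₁, hT₁, α, hα, biprod.inl_desc f α, fun Cg g h hTri => ?_⟩
  obtain ⟨Z, q, r, hZ⟩ := distinguished_cocone_triangle α
  have hZperp : Z⟦(-1:ℤ)⟧ ∈ rperp T :=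
    shift_neg_one_mem_rperp fun T' hT' => hα.hom_cone_eq_zero hrig hT₁ hZ hT'
  have hαg : α ≫ g = 0 := by
    have hαfg : biprod.desc f α ≫ g = 0 := comp_distTriang_mor_zero₁₂ _ hTri
    simpa using biprod.inr ≫= hαfg
  obtain ⟨b, rfl⟩ : ∃ b : Z ⟶ Cg, g = q ≫ b := Triangle.yoneda_exact₂ _ hZ g hαg
  let e := (shiftFunctorCompIsoId C (-1 : ℤ) (1 : ℤ) (by omega)).app Z
  exact ⟨_, hZperp, q ≫ e.inv, e.hom ≫ b, by simp⟩
end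

section
/- Let C be a triangulated category and T a contravariantly finite rigid full subcategory closed under direct summands. If A is an object such that the morphism 0 → A has the left lifting property with respect to every morphism in I^□ (where I consists of all morphisms T' → Y with T' in T and Y in T * ΣT), then A belongs to T * ΣT. -/
open CategoryTheory CategoryTheory.Limits CategoryTheory.Pretriangulated

variable {C : Type*} [Category C] [Preadditive C] [HasZeroObject C]
  [HasShift C ℤ] [∀ n : ℤ, Functor.Additive (CategoryTheory.shiftFunctor C n)]
  [Pretriangulated C]

/-- The subcategory `T * ΣT` of cones of morphisms of `T`. -/
def TstarSigmaT (T : Set C) : Set C :=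
  {A | ∃ T₁ ∈ T, ∃ T₀ ∈ T, ∃ (a : T₁ ⟶ (T₀ : C)) (b : (T₀ : C) ⟶ A)
    (c : A ⟶ (T₁ : C)⟦(1:ℤ)⟧), Triangle.mk a b c ∈ distTriang C}
open ZeroObject

/-- If `0 ⟶ A` has the left lifting property with respect to every morphism in `I^□`,
where `I` consists of the morphisms `T' ⟶ B` with `T' ∈ T` and `B ∈ T * ΣT`,
then `A` belongs to `T * ΣT`. -/
theorem cofibrant_mem_TstarSigmaT (T : Set C)
    (hcf : ContravariantlyFinite T) (hrig : IsRigid T)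
    (hiso : ClosedUnderIso T) (hsumm : ClosedUnderSummands T)
    (A : C)
    (hllp : ∀ ⦃Z W : C⦄ (g : Z ⟶ W),
      (∀ T' ∈ T, ∀ B ∈ TstarSigmaT T, ∀ (a : (T' : C) ⟶ (B : C)),
        HasLiftingProperty a g) →
      HasLiftingProperty (0 : (0 : C) ⟶ A) g) :
    A ∈ TstarSigmaT T := by
  -- Step 0: approximation of A
  obtain ⟨T₀, hT₀, p₀, hp₀⟩ := hcf A
  -- triangle X → T₀ → A → X⟦1⟧
  obtain ⟨X, f, h, hT1⟩ := Pretriangulated.distinguished_cocone_triangle₁ p₀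
  -- approximation of X
  obtain ⟨T₁, hT₁, p₁, hp₁⟩ := hcf X
  -- triangle T₁ → X → Y → T₁⟦1⟧
  obtain ⟨Y, q, e, hT2⟩ := Pretriangulated.distinguished_cocone_triangle p₁
  have hpq : p₁ ≫ q = 0 := Pretriangulated.comp_distTriang_mor_zero₁₂ _ hT2
  have hp₀h : p₀ ≫ h = 0 := Pretriangulated.comp_distTriang_mor_zero₂₃ _ hT1
  -- Hom(T, Y) = 0
  have hY : ∀ T'' ∈ T, ∀ (m : (T'' : C) ⟶ Y), m = 0 := by
    intro T'' hT'' m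
    have hme : m ≫ e = 0 := hrig T'' hT'' T₁ hT₁ (m ≫ e)
    obtain ⟨l, hl⟩ : ∃ l : T'' ⟶ X, m = l ≫ q := Triangle.coyoneda_exact₃ _ hT2 m hme
    obtain ⟨τ, hτ⟩ := hp₁ T'' hT'' l
    rw [hl, ← hτ, Category.assoc, hpq, comp_zero]
  -- the map δ : A → Y⟦1⟧ and the triangle Y → B → A → Y⟦1⟧
  set δ : A ⟶ Y⟦(1:ℤ)⟧ := h ≫ q⟦(1:ℤ)⟧' with hδdef
  have hp₀δ : p₀ ≫ δ = 0 := by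
    rw [hδdef, ← Category.assoc, hp₀h, zero_comp]
  obtain ⟨B, ε, g, hTB⟩ := Pretriangulated.distinguished_cocone_triangle₂ δ
  -- g has the RLP with respect to I
  have hRLP : ∀ T' ∈ T, ∀ B' ∈ TstarSigmaT T, ∀ (a : (T' : C) ⟶ (B' : C)),
      HasLiftingProperty a g := by
    intro T' hT' B' hB' a
    obtain ⟨T₁'', hT₁'', T₀'', hT₀'', a'', b'', c'', hTB'⟩ := hB'
    constructor
    intro u v sq
    -- first: v ≫ δ = 0
    have hz31 : δ ≫ ε⟦(1:ℤ)⟧' = 0 :=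
      Pretriangulated.comp_distTriang_mor_zero₃₁ _ hTB
    have h2 : (b'' ≫ v ≫ δ) ≫ ε⟦(1:ℤ)⟧' = 0 := by
      rw [Category.assoc, Category.assoc, hz31, comp_zero, comp_zero]
    obtain ⟨j, hj⟩ : ∃ j : (T₀'' : C) ⟶ A, b'' ≫ v ≫ δ = j ≫ δ :=
      Triangle.coyoneda_exact₁ _ hTB (b'' ≫ v ≫ δ) h2
    obtain ⟨j₀, hj₀⟩ := hp₀ T₀'' hT₀'' j
    have h1 : b'' ≫ (v ≫ δ) = 0 := by
      rw [hj, ← hj₀, Category.assoc, hp₀δ, comp_zero]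
    obtain ⟨m, hm⟩ : ∃ m : (T₁'' : C)⟦(1:ℤ)⟧ ⟶ Y⟦(1:ℤ)⟧, v ≫ δ = c'' ≫ m :=
      Triangle.yoneda_exact₃ _ hTB' (v ≫ δ) h1
    obtain ⟨m₀, hm₀⟩ := (shiftFunctor C (1:ℤ)).map_surjective m
    have hvδ : v ≫ δ = 0 := by
      rw [hm, ← hm₀, hY T₁'' hT₁'' m₀, Functor.map_zero, comp_zero]
    -- v factors through g
    obtain ⟨lam, hlam⟩ : ∃ lam : (B' : C) ⟶ B, v = lam ≫ g :=
      Triangle.coyoneda_exact₃ _ hTB v hvδ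
    -- correct on the top
    have h3 : (u - a ≫ lam) ≫ g = 0 := by
      rw [Preadditive.sub_comp, Category.assoc, ← hlam, sq.w, sub_self]
    obtain ⟨w, hwfac⟩ : ∃ w : (T' : C) ⟶ Y, u - a ≫ lam = w ≫ ε :=
      Triangle.coyoneda_exact₂ _ hTB (u - a ≫ lam) h3
    have hufac : u = a ≫ lam := by
      rw [hY T' hT' w, zero_comp, sub_eq_zero] at hwfac
      exact hwfac
    exact ⟨⟨⟨lam, hufac.symm, hlam.symm⟩⟩⟩
  -- apply the lifting hypothesis to get a section of g
  have hlift : HasLiftingProperty (0 : (0 : C) ⟶ A) g := hllp g hRLP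
  have sq : CommSq (0 : (0 : C) ⟶ B) (0 : (0 : C) ⟶ A) g (𝟙 A) := ⟨by simp⟩
  obtain ⟨⟨⟨s, _, hs⟩⟩⟩ := hlift.sq_hasLift sq
  -- δ = 0
  have hgδ : g ≫ δ = 0 := Pretriangulated.comp_distTriang_mor_zero₂₃ _ hTB
  have hδ0 : δ = 0 := by
    calc δ = (s ≫ g) ≫ δ := by rw [hs, Category.id_comp]
    _ = s ≫ (g ≫ δ) := Category.assoc _ _ _
    _ = 0 := by rw [hgδ, comp_zero]
  -- h factors through p₁⟦1⟧
  have hh : h ≫ q⟦(1:ℤ)⟧' = 0 := by rw [← hδdef]; exact hδ0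
  obtain ⟨h', hh'⟩ : ∃ h' : A ⟶ (T₁ : C)⟦(1:ℤ)⟧, h = h' ≫ (-(p₁⟦(1:ℤ)⟧')) :=
    Triangle.coyoneda_exact₁ _ (Pretriangulated.rot_of_distTriang _ hT2) h hh
  set h'' : A ⟶ (T₁ : C)⟦(1:ℤ)⟧ := -h' with hh''def
  have hfac : h = h'' ≫ p₁⟦(1:ℤ)⟧' := by
    rw [hh', hh''def, Preadditive.neg_comp, Preadditive.comp_neg]
  -- triangle T₁ → E → A → T₁⟦1⟧
  obtain ⟨E, α, β, hTE⟩ := Pretriangulated.distinguished_cocone_triangle₂ h''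
  -- get φ : E ⟶ T₀ with β = φ ≫ p₀
  obtain ⟨φ, hφ₁, hφ₂⟩ : ∃ φ : E ⟶ T₀, α ≫ φ = p₁ ≫ f ∧ β ≫ 𝟙 A = φ ≫ p₀ :=
    Pretriangulated.complete_distinguished_triangle_morphism₂ _ _ hTE hT1 p₁ (𝟙 A)
      (show h'' ≫ p₁⟦(1:ℤ)⟧' = 𝟙 A ≫ h by rw [Category.id_comp, hfac])
  rw [Category.comp_id] at hφ₂
  -- get φ' : T₀ ⟶ E with φ' ≫ β = p₀
  have hp₀h'' : p₀ ≫ h'' = 0 := hrig T₀ hT₀ T₁ hT₁ (p₀ ≫ h'')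
  obtain ⟨φ', hφ'⟩ : ∃ φ' : T₀ ⟶ E, p₀ = φ' ≫ β :=
    Triangle.coyoneda_exact₃ _ hTE p₀ hp₀h''
  -- get ρ : E ⟶ T₁ with 𝟙 E - φ ≫ φ' = ρ ≫ α
  have h4 : (𝟙 E - φ ≫ φ') ≫ β = 0 := by
    rw [Preadditive.sub_comp, Category.id_comp, Category.assoc, ← hφ', hφ₂, sub_self]
  obtain ⟨ρ, hρ⟩ : ∃ ρ : E ⟶ (T₁ : C), 𝟙 E - φ ≫ φ' = ρ ≫ α :=
    Triangle.coyoneda_exact₂ _ hTE (𝟙 E - φ ≫ φ') h4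
  -- approximation of E
  obtain ⟨T₂, hT₂, π, hπ⟩ := hcf E
  obtain ⟨α₁, hα₁⟩ := hπ T₁ hT₁ α
  obtain ⟨φ₁, hφ₁'⟩ := hπ T₀ hT₀ φ'
  have hE : E ∈ T := by
    refine hsumm E T₂ (φ ≫ φ₁ + ρ ≫ α₁) π ?_ hT₂
    rw [Preadditive.add_comp, Category.assoc, Category.assoc, hα₁, hφ₁', ← hρ]
    abel
  exact ⟨T₁, hT₁, E, hE, α, β, h'', hTE⟩
end
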